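/- Let φ = (1+√5)/2 and V(x,y,z) = (φ²x² − y²)(φ²y² − z²)(φ²z² − x²). Then for every (x,y,z) ∈ ℝ³ with x² + y² + z² = 1, one has V(x,y,z) ≤ (2+√5)/27. In particular, for ξ > (2+√5)/27 the intersection of the unit sphere with the surface V = ξ is empty. -/
import Mathlib

/-- The golden ratio. -/
noncomputable def φ : ℝ := (1 + Real.sqrt 5) / 2

/-- The degree-6 invariant of the icosahedral group. -/
noncomputable def V (x y z : ℝ) : ℝ :=
  (φ ^ 2 * x ^ 2 - y ^ 2) * (φ ^ 2 * y ^ 2 - z ^ 2) * (φ ^ 2 * z ^ 2 - x ^ 2)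

lemma phi_sq : φ ^ 2 = φ + 1 := by
  have h5 : Real.sqrt 5 ^ 2 = 5 := Real.sq_sqrt (by norm_num)
  show ((1 + Real.sqrt 5) / 2) ^ 2 = (1 + Real.sqrt 5) / 2 + 1
  linear_combination (1/4) * h5

lemma phi_gt : 1 < φ := by
  have h5 : Real.sqrt 5 ^ 2 = 5 := Real.sq_sqrt (by norm_num)
  have h2 : (2:ℝ) < Real.sqrt 5 := by nlinarith [Real.sqrt_nonneg 5]
  show 1 < (1 + Real.sqrt 5) / 2
  linarith

lemma phi_cube : φ ^ 3 = 2 + Real.sqrt 5 := by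
  have h1 : φ ^ 3 = 2 * φ + 1 := by linear_combination (φ + 1) * phi_sq
  rw [h1]; show 2 * ((1 + Real.sqrt 5) / 2) + 1 = _; ring

lemma key (g u v : ℝ) (hg : g ^ 2 = g + 1) (hg1 : 1 < g) (hu : 0 ≤ u) (hv : 0 ≤ v)
    (h : (2 + g) * u + v ≤ 1) : (g + u + v) * u * v ≤ g ^ 3 / 27 := by
  have hMv : v ≤ 1 - (2 + g) * u := by linarith
  have hM0 : 0 ≤ 1 - (2 + g) * u := le_trans hv hMv
  have hlin : 0 ≤ 5 * g + 3 - 3 * (g + 2) * u := by linarith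
  have hb : 0 ≤ g ^ 3 / 27 - (g + 1) * (1 - u) * u * (1 - (2 + g) * u) := by
    have e : 27 * (g + 1) * (g ^ 3 / 27 - (g + 1) * (1 - u) * u * (1 - (2 + g) * u)) =
        (3 * (g + 1) * u - 1) ^ 2 * (5 * g + 3 - 3 * (g + 2) * u) := by
      linear_combination (3 + 3 * u - 18 * u ^ 2 + 2 * g - 18 * g * u ^ 2 + g ^ 2) * hg
    have h1 : 0 ≤ 27 * (g + 1) *
        (g ^ 3 / 27 - (g + 1) * (1 - u) * u * (1 - (2 + g) * u)) := by
      rw [e]; exact mul_nonneg (sq_nonneg _) hlin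
    nlinarith [h1]
  rcases eq_or_lt_of_le hM0 with hM | hM
  · have hv0 : v = 0 := le_antisymm (by linarith) hv
    have : 0 < g ^ 3 := by positivity
    rw [hv0]; nlinarith
  · have hid : (1 - (2 + g) * u) * (g ^ 3 / 27 - (g + u + v) * u * v) =
        (1 - (2 + g) * u - v) * (g ^ 3 / 27)
        + v * (g ^ 3 / 27 - (g + 1) * (1 - u) * u * (1 - (2 + g) * u))
        + (1 - (2 + g) * u) * u * v * (1 - (2 + g) * u - v) := by ring
    have hg3 : 0 ≤ g ^ 3 / 27 := by positivity
    nlinarith [hid, mul_nonneg (mul_nonneg (mul_nonneg hM.le hu) hv)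
      (by linarith : (0:ℝ) ≤ 1 - (2 + g) * u - v), mul_nonneg hv hb,
      mul_nonneg (by linarith : (0:ℝ) ≤ 1 - (2 + g) * u - v) hg3, hM]

lemma helper (g a b c : ℝ) (hg : g ^ 2 = g + 1) (hg1 : 1 < g) (hs : a + b + c = g)
    (h1 : (2 + g) * (-b) + (-c) ≤ 1) (h2 : (2 + g) * (-c) + (-a) ≤ 1)
    (h3 : (2 + g) * (-a) + (-b) ≤ 1) : a * b * c ≤ g ^ 3 / 27 := by
  have hg3 : 0 < g ^ 3 := by positivity
  rcases le_or_gt 0 a with ha | ha <;> rcases le_or_gt 0 b with hb | hb <;>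
    rcases le_or_gt 0 c with hc | hc
  · have hcube : (a + b + c) ^ 3 = g ^ 3 := by rw [hs]
    nlinarith [hcube, mul_nonneg ha (sq_nonneg (b - c)), mul_nonneg hb (sq_nonneg (a - c)),
      mul_nonneg hc (sq_nonneg (a - b)), mul_nonneg (mul_nonneg ha hb) hc,
      mul_nonneg (by linarith : (0:ℝ) ≤ a + b + c) (sq_nonneg (a - b)),
      mul_nonneg (by linarith : (0:ℝ) ≤ a + b + c) (sq_nonneg (b - c)),
      mul_nonneg (by linarith : (0:ℝ) ≤ a + b + c) (sq_nonneg (a - c))]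
  · have : a * b * c ≤ 0 := mul_nonpos_of_nonneg_of_nonpos (mul_nonneg ha hb) hc.le
    linarith
  · have : a * b * c ≤ 0 :=
      mul_nonpos_of_nonpos_of_nonneg (mul_nonpos_of_nonneg_of_nonpos ha hb.le) hc
    linarith
  · have hk := key g (-b) (-c) hg hg1 (by linarith) (by linarith) h1
    have hae : a = g + (-b) + (-c) := by linarith
    calc a * b * c = (g + (-b) + (-c)) * (-b) * (-c) := by rw [← hae]; ring
      _ ≤ g ^ 3 / 27 := hk
  · have : a * b * c ≤ 0 :=
      mul_nonpos_of_nonpos_of_nonneg (mul_nonpos_of_nonpos_of_nonneg ha.le hb) hc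
    linarith
  · have hk := key g (-c) (-a) hg hg1 (by linarith) (by linarith) h2
    have hbe : b = g + (-c) + (-a) := by linarith
    calc a * b * c = (g + (-c) + (-a)) * (-c) * (-a) := by rw [← hbe]; ring
      _ ≤ g ^ 3 / 27 := hk
  · have hk := key g (-a) (-b) hg hg1 (by linarith) (by linarith) h3
    have hce : c = g + (-a) + (-b) := by linarith
    calc a * b * c = (g + (-a) + (-b)) * (-a) * (-b) := by rw [← hce]; ring
      _ ≤ g ^ 3 / 27 := hk
  · have hab : 0 ≤ a * b := by nlinarith
    have : a * b * c ≤ 0 := mul_nonpos_of_nonneg_of_nonpos hab hc.le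
    linarith

lemma main_ineq (x y z : ℝ) (h : x ^ 2 + y ^ 2 + z ^ 2 = 1) :
    V x y z ≤ (2 + Real.sqrt 5) / 27 := by
  have hg := phi_sq
  have hg1 := phi_gt
  have habc : (φ ^ 2 * x ^ 2 - y ^ 2) + (φ ^ 2 * y ^ 2 - z ^ 2) + (φ ^ 2 * z ^ 2 - x ^ 2)
      = φ := by linear_combination (φ ^ 2 - 1) * h + hg
  have h1 : (2 + φ) * (-(φ ^ 2 * y ^ 2 - z ^ 2)) + (-(φ ^ 2 * z ^ 2 - x ^ 2)) ≤ 1 := by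
    have he : (2 + φ) * (-(φ ^ 2 * y ^ 2 - z ^ 2)) + (-(φ ^ 2 * z ^ 2 - x ^ 2))
        = 1 - (4 + 4 * φ) * y ^ 2 := by
      linear_combination h + (-z ^ 2 + (-φ - 3) * y ^ 2) * hg
    nlinarith [sq_nonneg y, hg1]
  have h2 : (2 + φ) * (-(φ ^ 2 * z ^ 2 - x ^ 2)) + (-(φ ^ 2 * x ^ 2 - y ^ 2)) ≤ 1 := by
    have he : (2 + φ) * (-(φ ^ 2 * z ^ 2 - x ^ 2)) + (-(φ ^ 2 * x ^ 2 - y ^ 2))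
        = 1 - (4 + 4 * φ) * z ^ 2 := by
      linear_combination h + (-x ^ 2 + (-φ - 3) * z ^ 2) * hg
    nlinarith [sq_nonneg z, hg1]
  have h3 : (2 + φ) * (-(φ ^ 2 * x ^ 2 - y ^ 2)) + (-(φ ^ 2 * y ^ 2 - z ^ 2)) ≤ 1 := by
    have he : (2 + φ) * (-(φ ^ 2 * x ^ 2 - y ^ 2)) + (-(φ ^ 2 * y ^ 2 - z ^ 2))
        = 1 - (4 + 4 * φ) * x ^ 2 := by
      linear_combination h + (-y ^ 2 + (-φ - 3) * x ^ 2) * hg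
    nlinarith [sq_nonneg x, hg1]
  have := helper φ (φ ^ 2 * x ^ 2 - y ^ 2) (φ ^ 2 * y ^ 2 - z ^ 2) (φ ^ 2 * z ^ 2 - x ^ 2)
    hg hg1 habc h1 h2 h3
  rw [V, ← phi_cube]
  exact this

/-- On the unit sphere, `V ≤ (2+√5)/27`; in particular, for `ξ > (2+√5)/27` the
intersection of the unit sphere with the surface `V = ξ` is empty. -/
theorem stmt7 :
    (∀ x y z : ℝ, x ^ 2 + y ^ 2 + z ^ 2 = 1 → V x y z ≤ (2 + Real.sqrt 5) / 27) ∧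
    (∀ ξ : ℝ, ξ > (2 + Real.sqrt 5) / 27 →
      {p : ℝ × ℝ × ℝ | p.1 ^ 2 + p.2.1 ^ 2 + p.2.2 ^ 2 = 1 ∧ V p.1 p.2.1 p.2.2 = ξ} = ∅) := by
  refine ⟨main_ineq, ?_⟩
  intro ξ hξ
  rw [Set.eq_empty_iff_forall_notMem]
  rintro ⟨x, y, z⟩ ⟨h1, h2⟩
  have := main_ineq x y z h1
  rw [h2] at this
  linarith
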